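/- arXiv:1707.01795 — 2 statements merged into one kernel-verified Lean document; each statement's English description precedes it below -/
import Mathlib

section
/- Let d ≥ 1 be an integer and a ≥ 1 a real number. Let X, Y, Z be three variables. Suppose S_1(Y,Z) and S_2(X,Z) are real polynomials of total degree at most d−1, R_1(X,Y,Z) and R_2(X,Y,Z) are real polynomials of total degree at most d−2, and Δ^X(X,Y,Z), Δ^Y(X,Y,Z) are real polynomials of total degree at most d, satisfying the identity (aX − Y − Z)·S_1(Y,Z) + Δ^X(X,Y,Z) + X²·R_1(X,Y,Z) = (aY − X − Z)·S_2(X,Z) + Δ^Y(X,Y,Z) + Y²·R_2(X,Y,Z). Then there exist real polynomials C(Z) of degree at most d−2, A_1(Y,Z) of total degree at most d−3 (the zero polynomial when d < 3), and Δ(Y,Z) of total degree at most d−1, such that S_1(Y,Z) = ((a+1)Y − Z)·C(Z) + Y²·A_1(Y,Z) + Δ(Y,Z) and ‖Δ‖ ≤ 20a·max(‖Δ^X‖, ‖Δ^Y‖). -/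
/-!
Expand `S1 = Y² A1 + Y s₁ + s₀` with `s₀, s₁` polynomials in `Z`, and take `C = s₁ / (a + 1)`,
`Δ = s₀ + Z C`, so that `S1 = ((a + 1) Y - Z) C + Y² A1 + Δ`. With `D = Δ^X - Δ^Y`, the
coefficients of `Z^(k+1)` and `Y Z^k` in the identity, after eliminating `S2`, give
`(a + 1) Δ_k = a D_(Z^(k+1)) + D_(Y Z^k)`. By convexity of the square, `‖Δ‖ ≤ ‖D‖`, and
`‖D‖ ≤ 2 max(‖Δ^X‖, ‖Δ^Y‖)`.
-/

open MvPolynomial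

/-- Squared ℓ2 norm of the coefficient vector of a multivariate polynomial
in the standard monomial basis. -/
noncomputable def coeffNormSq {σ : Type*} (P : MvPolynomial σ ℝ) : ℝ :=
  ∑ m ∈ P.support, (P.coeff m) ^ 2

/-- ℓ2 norm of the coefficient vector of a multivariate polynomial. -/
noncomputable def coeffNorm {σ : Type*} (P : MvPolynomial σ ℝ) : ℝ :=
  Real.sqrt (coeffNormSq P)

open Finsupp (single)

section CoeffNorm

variable {σ : Type*}

lemma coeffNormSq_eq_sum_of_support_subset {P : MvPolynomial σ ℝ} {T : Finset (σ →₀ ℕ)}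
    (h : P.support ⊆ T) : coeffNormSq P = ∑ m ∈ T, P.coeff m ^ 2 :=
  Finset.sum_subset h fun m _ hm => by simp [notMem_support_iff.1 hm]

lemma sum_coeff_sq_le_coeffNormSq (P : MvPolynomial σ ℝ) (T : Finset (σ →₀ ℕ)) :
    ∑ m ∈ T, P.coeff m ^ 2 ≤ coeffNormSq P := by
  classical
  rw [coeffNormSq_eq_sum_of_support_subset (Finset.subset_union_right (s₁ := T))]
  exact Finset.sum_le_sum_of_subset_of_nonneg Finset.subset_union_left
    fun _ _ _ => sq_nonneg _

lemma coeffNormSq_sub_le (P Q : MvPolynomial σ ℝ) :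
    coeffNormSq (P - Q) ≤ 2 * coeffNormSq P + 2 * coeffNormSq Q := by
  classical
  rw [coeffNormSq_eq_sum_of_support_subset (support_sub σ P Q),
    coeffNormSq_eq_sum_of_support_subset Finset.subset_union_left,
    coeffNormSq_eq_sum_of_support_subset Finset.subset_union_right,
    Finset.mul_sum, Finset.mul_sum, ← Finset.sum_add_distrib]
  refine Finset.sum_le_sum fun m _ => ?_
  rw [coeff_sub]
  nlinarith [sq_nonneg (P.coeff m + Q.coeff m)]

lemma coeffNorm_sub_le (P Q : MvPolynomial σ ℝ) :
    coeffNorm (P - Q) ≤ 2 * max (coeffNorm P) (coeffNorm Q) := by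
  have hM : 0 ≤ max (coeffNorm P) (coeffNorm Q) :=
    (Real.sqrt_nonneg _).trans (le_max_left _ _)
  have hsq : ∀ R : MvPolynomial σ ℝ, coeffNorm R ≤ max (coeffNorm P) (coeffNorm Q) →
      coeffNormSq R ≤ max (coeffNorm P) (coeffNorm Q) ^ 2 := fun R hR =>
    (Real.sqrt_le_left hM).mp hR
  refine Real.sqrt_le_iff.mpr ⟨by positivity, ?_⟩
  nlinarith [coeffNormSq_sub_le P Q, hsq P (le_max_left _ _), hsq Q (le_max_right _ _)]

lemma coeffNormSq_le_of_coeff_eq {ι : Type*} {P D : MvPolynomial σ ℝ} {s : Finset ι}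
    {e f g : ι → σ →₀ ℕ} (he : Function.Injective e) (hf : Function.Injective f)
    (hg : Function.Injective g) (hP : P.support ⊆ s.map ⟨e, he⟩) {a : ℝ} (ha : 0 ≤ a)
    (hcoeff : ∀ k ∈ s, (a + 1) * P.coeff (e k) = a * D.coeff (f k) + D.coeff (g k)) :
    coeffNormSq P ≤ coeffNormSq D := by
  have hsum : ∀ h : ι → σ →₀ ℕ, Function.Injective h →
      ∑ k ∈ s, D.coeff (h k) ^ 2 ≤ coeffNormSq D := fun h hh => by
    simpa using sum_coeff_sq_le_coeffNormSq D (s.map ⟨h, hh⟩)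
  have hpoint : ∀ k ∈ s,
      (a + 1) * P.coeff (e k) ^ 2 ≤ a * D.coeff (f k) ^ 2 + D.coeff (g k) ^ 2 := by
    intro k hk
    -- `(a + 1) (a u² + v²) - (a u + v)² = a (u - v)²`
    refine le_of_mul_le_mul_left ?_ (by linarith : (0 : ℝ) < a + 1)
    rw [show (a + 1) * ((a + 1) * P.coeff (e k) ^ 2) = ((a + 1) * P.coeff (e k)) ^ 2 by ring,
      hcoeff k hk]
    nlinarith [mul_nonneg ha (sq_nonneg (D.coeff (f k) - D.coeff (g k)))]
  have hP' : coeffNormSq P = ∑ k ∈ s, P.coeff (e k) ^ 2 := by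
    rw [coeffNormSq_eq_sum_of_support_subset hP, Finset.sum_map]; rfl
  refine le_of_mul_le_mul_left ?_ (by linarith : (0 : ℝ) < a + 1)
  calc (a + 1) * coeffNormSq P
      ≤ a * ∑ k ∈ s, D.coeff (f k) ^ 2 + ∑ k ∈ s, D.coeff (g k) ^ 2 := by
        rw [hP', Finset.mul_sum, Finset.mul_sum, ← Finset.sum_add_distrib]
        exact Finset.sum_le_sum hpoint
    _ ≤ a * coeffNormSq D + coeffNormSq D := by gcongr <;> exact hsum _ ‹_›
    _ = (a + 1) * coeffNormSq D := by ring

end CoeffNorm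

section Division

variable {σ R : Type*} [CommSemiring R] {p : MvPolynomial σ R} {s m : σ →₀ ℕ}

lemma add_mem_support_of_mem_support_divMonomial (h : m ∈ (p.divMonomial s).support) :
    s + m ∈ p.support := by
  simpa [mem_support_iff] using h

lemma mem_support_of_mem_support_modMonomial (h : m ∈ (p.modMonomial s).support) :
    m ∈ p.support ∧ ¬ s ≤ m := by
  by_cases hs : s ≤ m
  · simp [mem_support_iff, coeff_modMonomial_of_le _ hs] at h
  · simpa [mem_support_iff, coeff_modMonomial_of_not_le _ hs, hs] using h

lemma degree_add_le_totalDegree_of_mem_support_divMonomial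
    (h : m ∈ (p.divMonomial s).support) : s.degree + m.degree ≤ p.totalDegree := by
  rw [← map_add]
  exact le_totalDegree (add_mem_support_of_mem_support_divMonomial h)

lemma totalDegree_divMonomial_le (p : MvPolynomial σ R) (s : σ →₀ ℕ) :
    (p.divMonomial s).totalDegree ≤ p.totalDegree - s.degree :=
  Finset.sup_le fun m hm => by
    have := degree_add_le_totalDegree_of_mem_support_divMonomial hm
    change m.degree ≤ _
    omega

lemma divMonomial_eq_zero_of_totalDegree_lt (h : p.totalDegree < s.degree) :
    p.divMonomial s = 0 := by
  by_contra h0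
  obtain ⟨m, hm⟩ := support_nonempty.mpr h0
  have := degree_add_le_totalDegree_of_mem_support_divMonomial hm
  omega

lemma totalDegree_modMonomial_le (p : MvPolynomial σ R) (s : σ →₀ ℕ) :
    (p.modMonomial s).totalDegree ≤ p.totalDegree :=
  totalDegree_le_of_support_subset fun _ hm => (mem_support_of_mem_support_modMonomial hm).1

lemma eq_X_sq_mul_add_X_mul_add (p : MvPolynomial σ R) (i : σ) :
    p = X i ^ 2 * p.divMonomial (single i 2)
      + X i * (p.modMonomial (single i 2)).divMonomial (single i 1)
      + (p.modMonomial (single i 2)).modMonomial (single i 1) := by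
  rw [add_assoc, X_pow_eq_monomial, X, divMonomial_add_modMonomial, divMonomial_add_modMonomial]

lemma coeff_X_mul_eq_zero_of_apply_eq_zero (p : MvPolynomial σ R) {i : σ} (h : m i = 0) :
    (X i * p).coeff m = 0 := by
  classical
  rw [coeff_X_mul', if_neg (by simpa using h)]

lemma apply_eq_zero_of_mem_support_X_mul {q : MvPolynomial σ R} {i j : σ} (hij : i ≠ j)
    (hq : ∀ m ∈ q.support, m j = 0) : ∀ m ∈ (X i * q).support, m j = 0 := by
  intro m hm
  rw [support_X_mul] at hm
  obtain ⟨m', hm', rfl⟩ := Finset.mem_map.1 hm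
  simp [hij, hq m' hm']

lemma apply_eq_zero_of_mem_support_add_X_mul {p q : MvPolynomial σ R} {i j : σ} (hij : i ≠ j)
    (hp : ∀ m ∈ p.support, m j = 0) (hq : ∀ m ∈ q.support, m j = 0) :
    ∀ m ∈ (p + X i * q).support, m j = 0 := by
  classical
  intro m hm
  rcases Finset.mem_union.1 (support_add hm) with h | h
  · exact hp m h
  · exact apply_eq_zero_of_mem_support_X_mul hij hq m h

lemma exists_X_sq_mul_add_X_mul_add (p : MvPolynomial σ R) (i j : σ) (n : ℕ)
    (hp : ∀ m ∈ p.support, m j = 0) (hpn : p.totalDegree ≤ n) :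
    ∃ A s₁ s₀ : MvPolynomial σ R, p = X i ^ 2 * A + X i * s₁ + s₀ ∧
      (∀ m ∈ A.support, m j = 0) ∧ A.totalDegree ≤ n - 2 ∧ (n < 2 → A = 0) ∧
      (∀ m ∈ s₁.support, m j = 0 ∧ m i = 0) ∧ s₁.totalDegree ≤ n - 1 ∧ (n < 1 → s₁ = 0) ∧
      (∀ m ∈ s₀.support, m j = 0 ∧ m i = 0) ∧ s₀.totalDegree ≤ n := by
  set T := p.modMonomial (single i 2)
  have hTn : T.totalDegree ≤ n := (totalDegree_modMonomial_le p _).trans hpn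
  refine ⟨p.divMonomial (single i 2), T.divMonomial (single i 1), T.modMonomial (single i 1),
    eq_X_sq_mul_add_X_mul_add p i, fun m hm => ?_, ?_, fun hn => ?_, fun m hm => ?_, ?_,
    fun hn => ?_, fun m hm => ?_, (totalDegree_modMonomial_le T _).trans hTn⟩
  · have := hp _ (add_mem_support_of_mem_support_divMonomial hm)
    rw [Finsupp.add_apply] at this
    omega
  · exact (totalDegree_divMonomial_le p _).trans (by simp only [Finsupp.degree_single]; omega)
  · exact divMonomial_eq_zero_of_totalDegree_lt (by simp only [Finsupp.degree_single]; omega)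
  · obtain ⟨hpm, hle⟩ :=
      mem_support_of_mem_support_modMonomial (add_mem_support_of_mem_support_divMonomial hm)
    have := hp _ hpm
    simp only [Finsupp.single_le_iff, Finsupp.add_apply, Finsupp.single_eq_same] at this hle
    omega
  · exact (totalDegree_divMonomial_le T _).trans (by simp only [Finsupp.degree_single]; omega)
  · exact divMonomial_eq_zero_of_totalDegree_lt (by simp only [Finsupp.degree_single]; omega)
  · obtain ⟨hTm, hle⟩ := mem_support_of_mem_support_modMonomial hm
    obtain ⟨hpm, -⟩ := mem_support_of_mem_support_modMonomial hTm
    simp only [Finsupp.single_le_iff] at hle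
    exact ⟨hp m hpm, by omega⟩

end Division

lemma support_subset_map_single_two {R : Type*} [CommSemiring R] {p : MvPolynomial (Fin 3) R}
    (hp : ∀ m ∈ p.support, m 0 = 0 ∧ m 1 = 0) :
    p.support ⊆ (Finset.range (p.totalDegree + 1)).map ⟨single 2, Finsupp.single_injective 2⟩ := by
  intro m hm
  obtain ⟨h0, h1⟩ := hp m hm
  have hm2 : single 2 (m 2) = m := by
    ext i
    fin_cases i <;> simp [h0, h1]
  refine Finset.mem_map.2 ⟨m 2, Finset.mem_range.2 ?_, hm2⟩
  have := (Finsupp.le_degree 2 m).trans (le_totalDegree hm)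
  omega

lemma exists_eq_linear_mul_add_sq_mul_add {K : Type*} [Field K] (S : MvPolynomial (Fin 3) K) {b : K}
    (hb : b ≠ 0) (n : ℕ) (hS : ∀ m ∈ S.support, m 0 = 0) (hSn : S.totalDegree ≤ n) :
    ∃ Cz A Δ : MvPolynomial (Fin 3) K,
      (∀ m ∈ Cz.support, m 0 = 0 ∧ m 1 = 0) ∧ Cz.totalDegree ≤ n - 1 ∧ (n < 1 → Cz = 0) ∧
      (∀ m ∈ A.support, m 0 = 0) ∧ A.totalDegree ≤ n - 2 ∧ (n < 2 → A = 0) ∧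
      (∀ m ∈ Δ.support, m 0 = 0 ∧ m 1 = 0) ∧ Δ.totalDegree ≤ n ∧
      S = (C b * X 1 - X 2) * Cz + X 1 ^ 2 * A + Δ := by
  obtain ⟨A, s₁, s₀, hS, hAv, hAd, hA0, hs₁v, hs₁d, hs₁0, hs₀v, hs₀d⟩ :=
    exists_X_sq_mul_add_X_mul_add S 1 0 n hS hSn
  have hCzv : ∀ m ∈ (b⁻¹ • s₁).support, m 0 = 0 ∧ m 1 = 0 := fun m hm =>
    hs₁v m (support_smul hm)
  have hCzd : (b⁻¹ • s₁).totalDegree ≤ n - 1 := (totalDegree_smul_le _ _).trans hs₁d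
  have hCz0 (hn : n < 1) : b⁻¹ • s₁ = 0 := by simp [hs₁0 hn]
  refine ⟨b⁻¹ • s₁, A, s₀ + X 2 * (b⁻¹ • s₁), hCzv, hCzd, hCz0, hAv, hAd, hA0,
    fun m hm => ⟨?_, ?_⟩, ?_, ?_⟩
  · exact apply_eq_zero_of_mem_support_add_X_mul (by decide) (fun m hm => (hs₀v m hm).1)
      (fun m hm => (hCzv m hm).1) m hm
  · exact apply_eq_zero_of_mem_support_add_X_mul (by decide) (fun m hm => (hs₀v m hm).2)
      (fun m hm => (hCzv m hm).2) m hm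
  · refine (totalDegree_add _ _).trans (max_le hs₀d ?_)
    rcases lt_or_ge n 1 with hn | hn
    · simp [hCz0 hn]
    · exact (totalDegree_mul _ _).trans (by rw [totalDegree_X]; omega)
  · have hC : C b * C b⁻¹ = (1 : MvPolynomial (Fin 3) K) := by
      rw [← C_mul, mul_inv_cancel₀ hb, C_1]
    rw [hS, smul_eq_C_mul]
    linear_combination (-(X 1 * s₁)) * hC

lemma add_one_mul_coeff_eq_of_identity {R : Type*} [CommRing R] {a : R}
    {S1 S2 R1 R2 DX DY Cz A Δ : MvPolynomial (Fin 3) R}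
    (hS2 : ∀ m ∈ S2.support, m 1 = 0) (hCz : ∀ m ∈ Cz.support, m 1 = 0)
    (hΔ : ∀ m ∈ Δ.support, m 1 = 0) (hS1 : S1 = (C (a + 1) * X 1 - X 2) * Cz + X 1 ^ 2 * A + Δ)
    (hid : (C a * X 0 - X 1 - X 2) * S1 + DX + X 0 ^ 2 * R1
         = (C a * X 1 - X 0 - X 2) * S2 + DY + X 1 ^ 2 * R2) (k : ℕ) :
    (a + 1) * Δ.coeff (single 2 k)
      = a * (DX - DY).coeff (single 2 1 + single 2 k)
        + (DX - DY).coeff (single 1 1 + single 2 k) := by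
  have hvanish : ∀ {q : MvPolynomial (Fin 3) R}, (∀ m ∈ q.support, m 1 = 0) →
      (X 2 * q).coeff (single 1 1 + single 2 k) = 0 := fun hq =>
    notMem_support_iff.1 fun h => by
      simpa using apply_eq_zero_of_mem_support_X_mul (by decide) hq _ h
  have hZ := congrArg (coeff (single 2 1 + single 2 k)) hid
  have hYZ := congrArg (coeff (single 1 1 + single 2 k)) hid
  simp only [sub_mul, mul_assoc, pow_two, coeff_add, coeff_sub, coeff_C_mul, Finsupp.coe_add,
    Pi.add_apply, ne_eq, Fin.reduceEq, not_false_eq_true, Finsupp.single_eq_of_ne, add_zero,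
    coeff_X_mul_eq_zero_of_apply_eq_zero, mul_zero, sub_self, coeff_X_mul, zero_sub, zero_ne_one,
    sub_zero, hvanish hS2] at hZ hYZ
  have hS1Z : S1.coeff (single 2 k) = Δ.coeff (single 2 k) - (X 2 * Cz).coeff (single 2 k) := by
    rw [hS1, show (C (a + 1) * X 1 - X 2) * Cz + X 1 ^ 2 * A + Δ
        = X 1 * (C (a + 1) * Cz + X 1 * A) + Δ - X 2 * Cz by ring,
      coeff_sub, coeff_add, coeff_X_mul_eq_zero_of_apply_eq_zero (i := 1) _ (by simp), zero_add]
  have hS1YZ : (X 2 * S1).coeff (single 1 1 + single 2 k)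
      = (a + 1) * (X 2 * Cz).coeff (single 2 k) := by
    rw [hS1, show X 2 * ((C (a + 1) * X 1 - X 2) * Cz + X 1 ^ 2 * A + Δ)
        = X 1 * (C (a + 1) * (X 2 * Cz)) + X 1 * (X 1 * (X 2 * A)) + X 2 * Δ
          - X 2 * (X 2 * Cz) by ring,
      coeff_sub, coeff_add, coeff_add, coeff_X_mul, coeff_X_mul, coeff_C_mul, hvanish hΔ,
      hvanish (apply_eq_zero_of_mem_support_X_mul (by decide) hCz),
      coeff_X_mul_eq_zero_of_apply_eq_zero (i := 1) (m := single 2 k) _ (by simp)]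
    ring
  rw [coeff_sub, coeff_sub]
  linear_combination (-a) * hZ - hYZ - (a + 1) * hS1Z - hS1YZ

/-- Variables are indexed by `Fin 3`: `X = X 0`, `Y = X 1`, `Z = X 2`. -/
theorem stmt1_general (d : ℕ) (a : ℝ) (ha : 1 ≤ a)
    (S1 S2 R1 R2 DX DY : MvPolynomial (Fin 3) ℝ)
    -- S1 is a polynomial in Y, Z only; S2 in X, Z only
    (hS1v : ∀ m ∈ S1.support, m 0 = 0)
    (hS2v : ∀ m ∈ S2.support, m 1 = 0)
    (hS1d : S1.totalDegree ≤ d - 1)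
    (hid : (C a * X 0 - X 1 - X 2) * S1 + DX + (X 0) ^ 2 * R1
         = (C a * X 1 - X 0 - X 2) * S2 + DY + (X 1) ^ 2 * R2) :
    ∃ Cz A1 Δ : MvPolynomial (Fin 3) ℝ,
      -- C is a polynomial in Z only, of degree at most d - 2
      (∀ m ∈ Cz.support, m 0 = 0 ∧ m 1 = 0) ∧
      Cz.totalDegree ≤ d - 2 ∧ (d < 2 → Cz = 0) ∧
      -- A1 is a polynomial in Y, Z only, of degree at most d - 3
      (∀ m ∈ A1.support, m 0 = 0) ∧
      A1.totalDegree ≤ d - 3 ∧ (d < 3 → A1 = 0) ∧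
      -- Δ is a polynomial in Y, Z only, of degree at most d - 1
      (∀ m ∈ Δ.support, m 0 = 0) ∧
      Δ.totalDegree ≤ d - 1 ∧
      S1 = (C (a + 1) * X 1 - X 2) * Cz + (X 1) ^ 2 * A1 + Δ ∧
      coeffNorm Δ ≤ 20 * a * max (coeffNorm DX) (coeffNorm DY) := by
  obtain ⟨Cz, A1, Δ, hCzv, hCzd, hCz0, hA1v, hA1d, hA10, hΔv, hΔd, hS1⟩ :=
    exists_eq_linear_mul_add_sq_mul_add S1 (b := a + 1) (by linarith) (d - 1) hS1v hS1d
  have hrel := add_one_mul_coeff_eq_of_identity hS2v (fun m hm => (hCzv m hm).2)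
    (fun m hm => (hΔv m hm).2) hS1 hid
  refine ⟨Cz, A1, Δ, hCzv, by omega, fun hd => hCz0 (by omega), hA1v, by omega,
    fun hd => hA10 (by omega), fun m hm => (hΔv m hm).1, hΔd, hS1, ?_⟩
  calc coeffNorm Δ ≤ coeffNorm (DX - DY) :=
        Real.sqrt_le_sqrt <| coeffNormSq_le_of_coeff_eq (Finsupp.single_injective 2)
          ((add_right_injective _).comp (Finsupp.single_injective 2))
          ((add_right_injective _).comp (Finsupp.single_injective 2))
          (support_subset_map_single_two hΔv) (by linarith) fun k _ => hrel k
    _ ≤ 2 * max (coeffNorm DX) (coeffNorm DY) := coeffNorm_sub_le DX DY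
    _ ≤ 20 * a * max (coeffNorm DX) (coeffNorm DY) :=
        mul_le_mul_of_nonneg_right (by linarith) ((Real.sqrt_nonneg _).trans (le_max_left _ _))

/-- Variable Removal Lemma. Variables are indexed by `Fin 3`:
`X = X 0`, `Y = X 1`, `Z = X 2`. -/
theorem stmt1 (d : ℕ) (hd : 1 ≤ d) (a : ℝ) (ha : 1 ≤ a)
    (S1 S2 R1 R2 DX DY : MvPolynomial (Fin 3) ℝ)
    -- S1 is a polynomial in Y, Z only; S2 in X, Z only
    (hS1v : ∀ m ∈ S1.support, m 0 = 0)
    (hS2v : ∀ m ∈ S2.support, m 1 = 0)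
    (hS1d : S1.totalDegree ≤ d - 1)
    (hS2d : S2.totalDegree ≤ d - 1)
    (hR1d : R1.totalDegree ≤ d - 2) (hR1z : d < 2 → R1 = 0)
    (hR2d : R2.totalDegree ≤ d - 2) (hR2z : d < 2 → R2 = 0)
    (hDXd : DX.totalDegree ≤ d) (hDYd : DY.totalDegree ≤ d)
    (hid : (C a * X 0 - X 1 - X 2) * S1 + DX + (X 0) ^ 2 * R1
         = (C a * X 1 - X 0 - X 2) * S2 + DY + (X 1) ^ 2 * R2) :
    ∃ Cz A1 Δ : MvPolynomial (Fin 3) ℝ,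
      -- C is a polynomial in Z only, of degree at most d - 2
      (∀ m ∈ Cz.support, m 0 = 0 ∧ m 1 = 0) ∧
      Cz.totalDegree ≤ d - 2 ∧ (d < 2 → Cz = 0) ∧
      -- A1 is a polynomial in Y, Z only, of degree at most d - 3
      (∀ m ∈ A1.support, m 0 = 0) ∧
      A1.totalDegree ≤ d - 3 ∧ (d < 3 → A1 = 0) ∧
      -- Δ is a polynomial in Y, Z only, of degree at most d - 1
      (∀ m ∈ Δ.support, m 0 = 0) ∧
      Δ.totalDegree ≤ d - 1 ∧
      S1 = (C (a + 1) * X 1 - X 2) * Cz + (X 1) ^ 2 * A1 + Δ ∧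
      coeffNorm Δ ≤ 20 * a * max (coeffNorm DX) (coeffNorm DY) :=
  stmt1_general d a ha S1 S2 R1 R2 DX DY hS1v hS2v hS1d hid
end

section
/- Let d ≥ 1 be an integer and set T = 10d. Let S be a real polynomial in the variables W_1, …, W_T of total degree at most d−1, and let Q = (1/√T)·(W_1 + ⋯ + W_T)·S. Then the number of indices j ∈ {1, …, T} such that ‖Q_{j,1}‖² ≥ (1/T)·(20dT)^{-4^d}·‖Q‖² is at least T/2. -/
open MvPolynomial Finset

/-- The `W_j`-linear part of a polynomial: collect all monomials in which the
variable `j` appears with exponent exactly `1` and delete the factor `W_j`. -/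
noncomputable def linearPart {T : ℕ} (Q : MvPolynomial (Fin T) ℝ) (j : Fin T) :
    MvPolynomial (Fin T) ℝ :=
  ∑ m ∈ Q.support.filter (fun m => m j = 1),
    monomial (m - Finsupp.single j 1) (Q.coeff m)

/-!
Write `Q = (∑ⱼ Wⱼ) * S'` with `S' = S / √T`. If fewer than `T / 2` indices are good, the set `B`
of bad indices has more than `5d` elements, and every coefficient of `Q` at a monomial in which
some `Wⱼ`, `j ∈ B`, has exponent one is a coefficient of `Q_{j,1}`, hence small.

These coefficients control `S'`. Take a monomial `n₀` of `S'`, an exponent `p` supported inside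
that of `n₀`, and a set `J ⊆ B` of variables absent from `n₀`. The coefficient of `Q` at `p + 1_J`
is `∑_{j ∈ J} S'(p + 1_{J - j})` plus the coefficients `S'(p - e_l + 1_J)`, `l ∈ supp p`; for
`l ∈ B` these have smaller `B`-degree, and for `l ∉ B` they have `B`-degree one more than `n₀`,
which is negligible once `n₀` is chosen at a suitable scale. The inequality
`∑_{|I| = r} v(I)² ≤ ∑_{|J| = r + 1} (∑_{j ∈ J} v(J - j))²`, valid on a ground set with at least
`2r + 1` elements, recovers the values `S'(p + 1_I)` from these sums, so induction on the
`B`-degree of `p` bounds `S'(n₀)`, and then every coefficient of `S'`, by a multiple of the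
threshold's square root. Summing over the at most `(d + 1)^T` monomials of `Q` then gives
`‖Q‖² < T (20dT)^{4^d} θ = ‖Q‖²`, where `θ` is the threshold.
-/

namespace Finset

variable {α : Type*} [DecidableEq α]

theorem sum_powersetCard_succ_sum_erase {M : Type*} [AddCommMonoid M] (F : Finset α) (r : ℕ)
    (f : Finset α → α → M) :
    ∑ J ∈ F.powersetCard (r + 1), ∑ j ∈ J, f (J.erase j) j
      = ∑ I ∈ F.powersetCard r, ∑ x ∈ F \ I, f I x := by
  rw [sum_sigma', sum_sigma']
  refine sum_nbij' (fun p => ⟨p.1.erase p.2, p.2⟩) (fun q => ⟨insert q.2 q.1, q.2⟩)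
    ?_ ?_ ?_ ?_ (fun _ _ => rfl)
  · rintro ⟨J, j⟩ hp
    simp only [mem_sigma, mem_powersetCard] at hp ⊢
    refine ⟨⟨(erase_subset _ _).trans hp.1.1, by rw [card_erase_of_mem hp.2, hp.1.2]; rfl⟩,
      mem_sdiff.2 ⟨hp.1.1 hp.2, notMem_erase _ _⟩⟩
  · rintro ⟨I, x⟩ hq
    simp only [mem_sigma, mem_powersetCard, mem_sdiff] at hq ⊢
    exact ⟨⟨insert_subset hq.2.1 hq.1.1, by rw [card_insert_of_notMem hq.2.2, hq.1.2]⟩,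
      mem_insert_self _ _⟩
  · rintro ⟨J, j⟩ hp
    rw [mem_sigma] at hp
    simp [insert_erase hp.2]
  · rintro ⟨I, x⟩ hq
    rw [mem_sigma, mem_sdiff] at hq
    simp [erase_insert hq.2.2]

theorem sq_sum_eq_sum_sq_add_sum_sum_erase (s : Finset α) (a : α → ℝ) :
    (∑ x ∈ s, a x) ^ 2
      = ∑ x ∈ s, a x ^ 2 + ∑ x ∈ s, ∑ y ∈ s.erase x, a x * a y := by
  rw [sq, sum_mul_sum, ← sum_add_distrib]
  refine sum_congr rfl fun x hx => ?_
  rw [← add_sum_erase s _ hx, sq]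

theorem sum_sq_sum_erase_eq (F : Finset α) {r : ℕ} (hr : r ≤ F.card) (v : Finset α → ℝ) :
    ∑ J ∈ F.powersetCard (r + 1), (∑ j ∈ J, v (J.erase j)) ^ 2
      = (F.card - r : ℝ) * ∑ I ∈ F.powersetCard r, v I ^ 2
        + ∑ I ∈ F.powersetCard r, ∑ y ∈ I, ∑ x ∈ F \ I,
            v I * v (insert x (I.erase y)) := by
  have hsq : ∀ J ∈ F.powersetCard (r + 1), (∑ j ∈ J, v (J.erase j)) ^ 2
      = ∑ j ∈ J, v (J.erase j) *
          ∑ y ∈ insert j (J.erase j), v ((insert j (J.erase j)).erase y) := by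
    intro J _
    rw [sq, sum_mul]
    exact sum_congr rfl fun j hj => by rw [insert_erase hj]
  have hsplit : ∀ I ∈ F.powersetCard r, ∀ x ∈ F \ I,
      v I * ∑ y ∈ insert x I, v ((insert x I).erase y)
        = v I ^ 2 + ∑ y ∈ I, v I * v (insert x (I.erase y)) := by
    intro I _ x hx
    have hxI := (mem_sdiff.1 hx).2
    rw [sum_insert hxI, erase_insert hxI, mul_add, sq, mul_sum]
    congr 1
    exact sum_congr rfl fun y hy => by rw [erase_insert_of_ne (ne_of_mem_of_not_mem hy hxI).symm]
  rw [sum_congr rfl hsq, sum_powersetCard_succ_sum_erase F r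
    (fun I x => v I * ∑ y ∈ insert x I, v ((insert x I).erase y)), mul_sum, ← sum_add_distrib]
  refine sum_congr rfl fun I hI => ?_
  rw [sum_congr rfl (hsplit I hI), sum_add_distrib, sum_const, sum_comm, nsmul_eq_mul,
    card_sdiff_of_subset (mem_powersetCard.1 hI).1, (mem_powersetCard.1 hI).2, Nat.cast_sub hr]

/-- Reindexed by `H = I - y`, the cross terms become `∑_H ((∑ₓ v(H + x))² - ∑ₓ v(H + x)²)`,
where `x` ranges over `F \ H`. -/
theorem neg_mul_sum_sq_le_sum_cross (F : Finset α) (r : ℕ) (v : Finset α → ℝ) :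
    -(r * ∑ I ∈ F.powersetCard r, v I ^ 2)
      ≤ ∑ I ∈ F.powersetCard r, ∑ y ∈ I, ∑ x ∈ F \ I,
          v I * v (insert x (I.erase y)) := by
  cases r with
  | zero => simp
  | succ s =>
    have hreindex := sum_powersetCard_succ_sum_erase F s
      (fun H y => ∑ x ∈ (F \ H).erase y, v (insert y H) * v (insert x H))
    have hdiag := sum_powersetCard_succ_sum_erase F s (fun H y => v (insert y H) ^ 2)
    rw [sum_congr rfl fun I _ => sum_congr rfl fun y hy => by
      rw [← sdiff_insert, insert_erase hy]] at hreindex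
    rw [sum_congr rfl fun I hI => by
      rw [sum_congr rfl fun y hy => by rw [insert_erase hy], sum_const,
        (mem_powersetCard.1 hI).2, nsmul_eq_mul]] at hdiag
    rw [hreindex, mul_sum, hdiag, ← sum_neg_distrib]
    refine sum_le_sum fun H _ => ?_
    have := sq_sum_eq_sum_sq_add_sum_sum_erase (F \ H) (fun y => v (insert y H))
    linarith [sq_nonneg (∑ y ∈ F \ H, v (insert y H))]

theorem sum_sq_le_sum_sq_sum_erase (F : Finset α) {r : ℕ} (hr : 2 * r + 1 ≤ F.card)
    (v : Finset α → ℝ) :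
    ∑ I ∈ F.powersetCard r, v I ^ 2
      ≤ ∑ J ∈ F.powersetCard (r + 1), (∑ j ∈ J, v (J.erase j)) ^ 2 := by
  rw [sum_sq_sum_erase_eq F (by omega) v]
  have hcross := neg_mul_sum_sq_le_sum_cross F r v
  have hnonneg : 0 ≤ ∑ I ∈ F.powersetCard r, v I ^ 2 := sum_nonneg fun _ _ => sq_nonneg _
  have hcard : (2 * r + 1 : ℝ) ≤ F.card := by exact_mod_cast hr
  nlinarith

theorem abs_le_of_forall_abs_sum_erase_le (F : Finset α) {r : ℕ} (hr : 2 * r + 1 ≤ F.card)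
    (v : Finset α → ℝ) {a ρ : ℝ} (ha : 0 ≤ a)
    (hchoose : (F.card.choose (r + 1) : ℝ) ≤ a ^ 2)
    (hρ : ∀ J ∈ F.powersetCard (r + 1), |∑ j ∈ J, v (J.erase j)| ≤ ρ)
    {I : Finset α} (hI : I ∈ F.powersetCard r) : |v I| ≤ a * ρ := by
  obtain ⟨J, hJ⟩ := powersetCard_nonempty.2 (show r + 1 ≤ F.card by omega)
  have hρ0 : 0 ≤ ρ := (abs_nonneg _).trans (hρ J hJ)
  refine abs_le_of_sq_le_sq ?_ (mul_nonneg ha hρ0)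
  calc v I ^ 2 ≤ ∑ I ∈ F.powersetCard r, v I ^ 2 :=
        single_le_sum (f := fun I => v I ^ 2) (fun _ _ => sq_nonneg _) hI
    _ ≤ ∑ J ∈ F.powersetCard (r + 1), (∑ j ∈ J, v (J.erase j)) ^ 2 :=
        sum_sq_le_sum_sq_sum_erase F hr v
    _ ≤ ∑ _J ∈ F.powersetCard (r + 1), ρ ^ 2 :=
        sum_le_sum fun J hJ => sq_le_sq' (abs_le.1 (hρ J hJ)).1 (abs_le.1 (hρ J hJ)).2
    _ = F.card.choose (r + 1) * ρ ^ 2 := by rw [sum_const, card_powersetCard, nsmul_eq_mul]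
    _ ≤ (a * ρ) ^ 2 := by rw [mul_pow]; gcongr

end Finset

theorem exists_large_with_small_next_level {ι : Type*} (s : Finset ι) (f : ι → ℝ)
    (g : ι → ℕ) {η : ℝ} (hη0 : 0 ≤ η) (hη1 : η ≤ 1) {i₀ : ι} (hi₀ : i₀ ∈ s)
    (hf₀ : 0 ≤ f i₀) :
    ∃ i ∈ s, f i₀ * η ^ g i ≤ f i ∧ ∀ i' ∈ s, g i' = g i + 1 → f i' ≤ η * f i := by
  classical
  obtain ⟨i, hi, hmax⟩ := (s.filter fun i => f i₀ * η ^ g i ≤ f i).exists_max_image g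
    ⟨i₀, mem_filter.2 ⟨hi₀, mul_le_of_le_one_right hf₀ (pow_le_one₀ hη0 hη1)⟩⟩
  rw [mem_filter] at hi
  refine ⟨i, hi.1, hi.2, fun i' hi' hg => ?_⟩
  by_contra! h
  have hi'large : f i₀ * η ^ g i' ≤ f i' := by
    rw [hg, pow_succ, ← mul_assoc]
    nlinarith [hi.2]
  have := hmax i' (mem_filter.2 ⟨hi', hi'large⟩)
  omega

section CoeffNormSq

variable {σ : Type*}

theorem coeffNormSq_nonneg (P : MvPolynomial σ ℝ) : 0 ≤ coeffNormSq P :=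
  sum_nonneg fun _ _ => sq_nonneg _

theorem sq_coeff_le_coeffNormSq (P : MvPolynomial σ ℝ) (m : σ →₀ ℕ) :
    P.coeff m ^ 2 ≤ coeffNormSq P := by
  by_cases hm : m ∈ P.support
  · exact single_le_sum (f := fun m => P.coeff m ^ 2) (fun _ _ => sq_nonneg _) hm
  · rw [notMem_support_iff.1 hm, sq, zero_mul]
    exact coeffNormSq_nonneg P

theorem coeffNormSq_le_card_support_mul (P : MvPolynomial σ ℝ) {c : ℝ}
    (h : ∀ m ∈ P.support, |P.coeff m| ≤ c) : coeffNormSq P ≤ P.support.card * c ^ 2 := by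
  rw [← nsmul_eq_mul, ← sum_const]
  exact sum_le_sum fun m hm =>
    (sq_abs _).symm.trans_le (pow_le_pow_left₀ (abs_nonneg _) (h m hm) 2)

end CoeffNormSq

theorem coeff_linearPart {T : ℕ} (Q : MvPolynomial (Fin T) ℝ) {j : Fin T} {m : Fin T →₀ ℕ}
    (hm : m j = 1) : (linearPart Q j).coeff (m - Finsupp.single j 1) = Q.coeff m := by
  have hcancel : ∀ m' : Fin T →₀ ℕ, m' j = 1 →
      m' - Finsupp.single j 1 + Finsupp.single j 1 = m' :=
    fun m' h => tsub_add_cancel_of_le (Finsupp.single_le_iff.2 h.ge)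
  simp only [linearPart, coeff_sum, coeff_monomial]
  by_cases hmQ : m ∈ Q.support
  · rw [sum_eq_single_of_mem m (mem_filter.2 ⟨hmQ, hm⟩)
      (fun m' hm' hne => if_neg fun h => hne ?_), if_pos rfl]
    rw [← hcancel m' (mem_filter.1 hm').2, h, hcancel m hm]
  · refine (sum_eq_zero fun m' hm' => if_neg fun h => hmQ ?_).trans (notMem_support_iff.1 hmQ).symm
    rw [← hcancel m hm, ← h, hcancel m' (mem_filter.1 hm').2]
    exact (mem_filter.1 hm').1

theorem Finsupp.card_support_le_degree {σ : Type*} (n : σ →₀ ℕ) :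
    n.support.card ≤ n.degree := by
  classical
  rw [← Finsupp.toFinset_toMultiset]
  exact (Multiset.toFinset_card_le _).trans (Finsupp.card_toMultiset n).le

section Fintype

variable {σ : Type*} [Fintype σ]

theorem card_support_le_of_totalDegree_le {R : Type*} [CommSemiring R] (P : MvPolynomial σ R)
    {k : ℕ} (hP : P.totalDegree ≤ k) : P.support.card ≤ (k + 1) ^ Fintype.card σ := by
  classical
  have hmaps : ∀ m ∈ P.support, ⇑m ∈ Fintype.piFinset fun _ => range (k + 1) := fun m hm =>
    Fintype.mem_piFinset.2 fun i =>
      mem_range.2 (Nat.lt_succ_of_le (((m.le_degree i).trans (le_totalDegree hm)).trans hP))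
  calc P.support.card ≤ (Fintype.piFinset fun _ : σ => range (k + 1)).card :=
        card_le_card_of_injOn _ hmaps DFunLike.coe_injective.injOn
    _ = (k + 1) ^ Fintype.card σ := by simp

variable [DecidableEq σ]

theorem coeff_sum_X_mul {R : Type*} [CommSemiring R] (S : MvPolynomial σ R) (m : σ →₀ ℕ) :
    ((∑ j, X j) * S).coeff m = ∑ l ∈ m.support, S.coeff (m - Finsupp.single l 1) := by
  simp_rw [sum_mul, coeff_sum, mul_comm (X _), coeff_mul_X', sum_ite_mem, univ_inter]

end Fintype
section Recovery

variable {σ : Type*}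

noncomputable def oneOn (J : Finset σ) : σ →₀ ℕ := ∑ j ∈ J, Finsupp.single j 1

def degreeOn (B : Finset σ) (n : σ →₀ ℕ) : ℕ := ∑ i ∈ B, n i

@[simp]
theorem oneOn_empty : oneOn (∅ : Finset σ) = 0 := sum_empty

theorem degreeOn_add (B : Finset σ) (m n : σ →₀ ℕ) :
    degreeOn B (m + n) = degreeOn B m + degreeOn B n :=
  sum_add_distrib

theorem degreeOn_le_degree [Fintype σ] (B : Finset σ) (n : σ →₀ ℕ) :
    degreeOn B n ≤ n.degree := by
  rw [Finsupp.degree_eq_sum]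
  exact sum_le_sum_of_subset (subset_univ B)

theorem Finsupp.single_one_le_of_mem_support {p : σ →₀ ℕ} {l : σ} (hl : l ∈ p.support) :
    Finsupp.single l 1 ≤ p :=
  Finsupp.single_le_iff.2 (Nat.one_le_iff_ne_zero.2 (Finsupp.mem_support_iff.1 hl))

variable [DecidableEq σ]

theorem oneOn_apply (J : Finset σ) (i : σ) : oneOn J i = if i ∈ J then 1 else 0 := by
  simp [oneOn, Finsupp.finsetSum_apply, Finsupp.single_apply]

@[simp]
theorem support_oneOn (J : Finset σ) : (oneOn J).support = J := by
  ext i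
  simp [oneOn_apply]

theorem oneOn_eq_oneOn_erase_add {J : Finset σ} {j : σ} (hj : j ∈ J) :
    oneOn J = oneOn (J.erase j) + Finsupp.single j 1 :=
  (sum_erase_add J _ hj).symm

theorem degreeOn_oneOn {B J : Finset σ} (hJ : J ⊆ B) : degreeOn B (oneOn J) = J.card := by
  simp [degreeOn, oneOn_apply, sum_ite_mem, inter_eq_right.2 hJ]

theorem degreeOn_sub_single_add {B : Finset σ} {p : σ →₀ ℕ} {l : σ} (hl : l ∈ p.support) :
    degreeOn B (p - Finsupp.single l 1) + (if l ∈ B then 1 else 0) = degreeOn B p := by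
  conv_rhs => rw [← tsub_add_cancel_of_le (Finsupp.single_one_le_of_mem_support hl)]
  rw [degreeOn_add]
  congr 1
  simp [degreeOn, Finsupp.single_apply]

variable [Fintype σ] {S : MvPolynomial σ ℝ} {B : Finset σ} {τ : ℝ}

theorem coeff_sum_X_mul_add_oneOn {p : σ →₀ ℕ} {J : Finset σ} (hpJ : Disjoint p.support J) :
    ((∑ j, X j) * S).coeff (p + oneOn J)
      = ∑ j ∈ J, S.coeff (p + oneOn (J.erase j))
        + ∑ l ∈ p.support, S.coeff (p - Finsupp.single l 1 + oneOn J) := by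
  rw [coeff_sum_X_mul, Finsupp.support_add_eq (by rwa [support_oneOn]), support_oneOn,
    sum_union hpJ, add_comm]
  congr 1
  · refine sum_congr rfl fun j hj => ?_
    rw [oneOn_eq_oneOn_erase_add hj, ← add_assoc, add_tsub_cancel_right]
  · refine sum_congr rfl fun l hl => ?_
    rw [tsub_add_eq_add_tsub (Finsupp.single_one_le_of_mem_support hl)]

theorem abs_sum_coeff_add_oneOn_erase_le
    (hτ : ∀ m, (∃ j ∈ B, m j = 1) → |((∑ j, X j) * S).coeff m| ≤ τ)
    {p : σ →₀ ℕ} {J : Finset σ} (hJB : J ⊆ B) (hJ : J.Nonempty) (hpJ : Disjoint p.support J)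
    {k : ℕ} (hp : p.support.card ≤ k) {c : ℝ} (hc0 : 0 ≤ c)
    (hc : ∀ l ∈ p.support, |S.coeff (p - Finsupp.single l 1 + oneOn J)| ≤ c) :
    |∑ j ∈ J, S.coeff (p + oneOn (J.erase j))| ≤ τ + k * c := by
  obtain ⟨j, hj⟩ := hJ
  have hpj : p j = 0 := Finsupp.notMem_support_iff.1 (disjoint_right.1 hpJ hj)
  have hcoeff := hτ (p + oneOn J) ⟨j, hJB hj, by simp [oneOn_apply, hj, hpj]⟩
  rw [coeff_sum_X_mul_add_oneOn hpJ] at hcoeff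
  set rest := ∑ l ∈ p.support, S.coeff (p - Finsupp.single l 1 + oneOn J)
  have hrest : |rest| ≤ k * c :=
    calc |rest| ≤ ∑ l ∈ p.support, |S.coeff (p - Finsupp.single l 1 + oneOn J)| :=
          abs_sum_le_sum_abs _ _
      _ ≤ p.support.card * c := by rw [← nsmul_eq_mul]; exact sum_le_card_nsmul _ _ _ hc
      _ ≤ k * c := by gcongr
  have := abs_sub (∑ j ∈ J, S.coeff (p + oneOn (J.erase j)) + rest) rest
  rw [add_sub_cancel_right] at this
  linarith

/-- For `p` supported on `D` and `J' ⊆ B \ D`, the monomial `p + 1_{J'}` has exponent one in the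
variables of `J'`, so `coeff_sum_X_mul_add_oneOn` bounds the sums `∑_{j ∈ J'} S(p + 1_{J' - j})`
by `τ` plus the coefficients `S(p - e_l + 1_{J'})`: those with `l ∈ B` lie on the next level,
those with `l ∉ B` have `B`-degree `b + 1`. The inversion inequality then recovers
`S(p + 1_J)` from these sums. -/
theorem abs_coeff_add_oneOn_le_of_next_level
    (hτ : ∀ m, (∃ j ∈ B, m j = 1) → |((∑ j, X j) * S).coeff m| ≤ τ)
    {D : Finset σ} {k b : ℕ} (hD : D.card ≤ k) (hb : b ≤ k) (hF : 2 * k + 1 ≤ (B \ D).card)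
    {ε β : ℝ} (hε0 : 0 ≤ ε) (hβ0 : 0 ≤ β)
    (hε : ∀ n, degreeOn B n = b + 1 → |S.coeff n| ≤ ε)
    {p : σ →₀ ℕ} (hp : p.support ⊆ D) {J : Finset σ} (hJ : J ⊆ B \ D)
    (hlevel : J.card + degreeOn B p = b)
    (hnext : ∀ l ∈ p.support, l ∈ B → ∀ J' ⊆ B \ D, J'.card = J.card + 1 →
      |S.coeff (p - Finsupp.single l 1 + oneOn J')| ≤ β) :
    |S.coeff (p + oneOn J)| ≤ (Fintype.card σ : ℝ) ^ (k + 1) * (τ + k * (ε + β)) := by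
  have hN : 1 ≤ Fintype.card σ := (card_le_univ (B \ D)).trans' (by omega)
  have hchoose :
      ((B \ D).card.choose (J.card + 1) : ℝ) ≤ ((Fintype.card σ : ℝ) ^ (k + 1)) ^ 2 := by
    rw [← pow_mul]
    exact_mod_cast calc
      (B \ D).card.choose (J.card + 1) ≤ (B \ D).card ^ (J.card + 1) := Nat.choose_le_pow _ _
      _ ≤ Fintype.card σ ^ (J.card + 1) := Nat.pow_le_pow_left (card_le_univ _) _
      _ ≤ Fintype.card σ ^ ((k + 1) * 2) := Nat.pow_le_pow_right hN (by omega)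
  refine abs_le_of_forall_abs_sum_erase_le (B \ D) (by omega) (fun I => S.coeff (p + oneOn I))
    (by positivity) hchoose (fun J' hJ' => ?_) (mem_powersetCard.2 ⟨hJ, rfl⟩)
  obtain ⟨hJ'D, hJ'card⟩ := mem_powersetCard.1 hJ'
  have hJ'B : J' ⊆ B := hJ'D.trans sdiff_subset
  refine abs_sum_coeff_add_oneOn_erase_le hτ hJ'B (card_pos.1 (by omega))
    (disjoint_sdiff.mono hp hJ'D) ((card_le_card hp).trans hD) (by positivity) fun l hl => ?_
  by_cases hlB : l ∈ B
  · exact (hnext l hl hlB J' hJ'D hJ'card).trans (le_add_of_nonneg_left hε0)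
  · refine (hε _ ?_).trans (le_add_of_nonneg_right hβ0)
    have hdeg := degreeOn_sub_single_add (B := B) hl
    rw [if_neg hlB, add_zero] at hdeg
    rw [degreeOn_add, degreeOn_oneOn hJ'B, hdeg]
    omega

theorem mul_add_mul_add_pow_mul_le {a τ ε : ℝ} (k t : ℕ) (ha : 1 ≤ a) (hτ0 : 0 ≤ τ)
    (hε0 : 0 ≤ ε) :
    a * (τ + k * (ε + ((2 * k + 1) * a) ^ t * (τ + ε)))
      ≤ ((2 * k + 1) * a) ^ (t + 1) * (τ + ε) := by
  have hAt : 1 ≤ ((2 * k + 1) * a) ^ t := one_le_pow₀ (by nlinarith)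
  have hc : τ + ε ≤ ((2 * k + 1) * a) ^ t * (τ + ε) := le_mul_of_one_le_left (by positivity) hAt
  have hk : (0 : ℝ) ≤ k := k.cast_nonneg
  have hε : k * ε ≤ k * (((2 * k + 1) * a) ^ t * (τ + ε)) := by gcongr; linarith
  calc a * (τ + k * (ε + ((2 * k + 1) * a) ^ t * (τ + ε)))
      ≤ a * ((2 * k + 1) * (((2 * k + 1) * a) ^ t * (τ + ε))) := by gcongr; nlinarith
    _ = ((2 * k + 1) * a) ^ (t + 1) * (τ + ε) := by ring

theorem abs_coeff_add_oneOn_le_pow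
    (hτ : ∀ m, (∃ j ∈ B, m j = 1) → |((∑ j, X j) * S).coeff m| ≤ τ)
    {D : Finset σ} {k b : ℕ} (hD : D.card ≤ k) (hb : b ≤ k) (hF : 2 * k + 1 ≤ (B \ D).card)
    {ε : ℝ} (hτ0 : 0 ≤ τ) (hε0 : 0 ≤ ε) (hε : ∀ n, degreeOn B n = b + 1 → |S.coeff n| ≤ ε)
    (t : ℕ) :
    ∀ p : σ →₀ ℕ, p.support ⊆ D → degreeOn B p = t → ∀ J ⊆ B \ D, J.card + t = b →
      |S.coeff (p + oneOn J)|
        ≤ ((2 * k + 1) * (Fintype.card σ : ℝ) ^ (k + 1)) ^ (t + 1) * (τ + ε) := by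
  have ha : (1 : ℝ) ≤ (Fintype.card σ : ℝ) ^ (k + 1) :=
    one_le_pow₀ (by exact_mod_cast (card_le_univ (B \ D)).trans' (by omega))
  induction t with
  | zero =>
    intro p hp hpt J hJ hlevel
    refine (abs_coeff_add_oneOn_le_of_next_level hτ hD hb hF hε0 (by positivity) hε hp hJ
      (by omega) fun l hl hlB => ?_).trans (mul_add_mul_add_pow_mul_le k 0 ha hτ0 hε0)
    have := degreeOn_sub_single_add (B := B) hl
    simp [hlB, hpt] at this
  | succ t ih =>
    intro p hp hpt J hJ hlevel
    refine (abs_coeff_add_oneOn_le_of_next_level hτ hD hb hF hε0 (by positivity) hε hp hJ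
      (by omega) fun l hl hlB J' hJ' hJ'card => ?_).trans
      (mul_add_mul_add_pow_mul_le k (t + 1) ha hτ0 hε0)
    have hdeg := degreeOn_sub_single_add (B := B) hl
    rw [if_pos hlB] at hdeg
    exact ih _ (Finsupp.support_tsub.trans hp) (by omega) J' hJ' (by omega)

def recoveryConst (N k : ℕ) : ℕ := (2 * ((2 * k + 1) * N ^ (k + 1)) ^ (k + 1)) ^ (k + 1)

theorem abs_coeff_le_of_abs_coeff_sum_X_mul_le {k : ℕ} (hS : S.totalDegree ≤ k)
    (hB : 3 * k + 1 ≤ B.card)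
    (hτ : ∀ m, (∃ j ∈ B, m j = 1) → |((∑ j, X j) * S).coeff m| ≤ τ) (n : σ →₀ ℕ) :
    |S.coeff n| ≤ recoveryConst (Fintype.card σ) k * τ := by
  obtain ⟨j, hj⟩ := card_pos.1 (show 0 < B.card by omega)
  have hτ0 : 0 ≤ τ := (abs_nonneg _).trans (hτ _ ⟨j, hj, Finsupp.single_eq_same⟩)
  set A : ℝ := (2 * k + 1) * (Fintype.card σ : ℝ) ^ (k + 1)
  have hA : 1 ≤ A := one_le_mul_of_one_le_of_one_le (by linarith [k.cast_nonneg (α := ℝ)])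
    (one_le_pow₀ (by exact_mod_cast Fintype.card_pos_iff.2 ⟨j⟩))
  have hAk : 1 ≤ A ^ (k + 1) := one_le_pow₀ hA
  -- `η` is chosen so that the error `η M` costs at most `M / 2` after propagation.
  set η : ℝ := (2 * A ^ (k + 1))⁻¹
  have hη0 : 0 < η := by positivity
  by_cases hn : n ∈ S.support
  swap
  · rw [notMem_support_iff.1 hn, abs_zero]
    positivity
  obtain ⟨n₀, hn₀, hscale, hgap⟩ := exists_large_with_small_next_level S.support
    (fun n => |S.coeff n|) (degreeOn B) hη0.le (inv_le_one_of_one_le₀ (by linarith)) hn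
    (abs_nonneg _)
  set b := degreeOn B n₀
  have hb : b ≤ k := ((degreeOn_le_degree B n₀).trans (le_totalDegree hn₀)).trans hS
  have hD : n₀.support.card ≤ k :=
    (n₀.card_support_le_degree.trans (le_totalDegree hn₀)).trans hS
  have hF : 2 * k + 1 ≤ (B \ n₀.support).card := by
    have := le_card_sdiff n₀.support B
    omega
  have hε : ∀ n, degreeOn B n = b + 1 → |S.coeff n| ≤ η * |S.coeff n₀| := by
    intro n hn
    by_cases h : n ∈ S.support
    · exact hgap n h hn
    · rw [notMem_support_iff.1 h, abs_zero]
      positivity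
  have hM : |S.coeff (n₀ + oneOn ∅)| ≤ A ^ (b + 1) * (τ + η * |S.coeff n₀|) :=
    abs_coeff_add_oneOn_le_pow hτ hD hb hF hτ0 (by positivity) hε b n₀ subset_rfl rfl ∅
      (empty_subset _) (zero_add b)
  rw [oneOn_empty, add_zero] at hM
  have hM' : |S.coeff n₀| ≤ 2 * A ^ (k + 1) * τ := by
    have hAb := hM.trans (mul_le_mul_of_nonneg_right
      (pow_le_pow_right₀ hA (show b + 1 ≤ k + 1 by omega)) (by positivity))
    have hηA : A ^ (k + 1) * η = 1 / 2 := by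
      simp only [η]
      field_simp
    rw [mul_add, ← mul_assoc, hηA] at hAb
    linarith
  have hC : (recoveryConst (Fintype.card σ) k : ℝ) = (2 * A ^ (k + 1)) ^ (k + 1) := by
    simp [recoveryConst, A]
  calc |S.coeff n| = |S.coeff n| * η ^ b * (2 * A ^ (k + 1)) ^ b := by
        rw [mul_assoc, ← mul_pow, inv_mul_cancel₀ (by positivity), one_pow, mul_one]
    _ ≤ 2 * A ^ (k + 1) * τ * (2 * A ^ (k + 1)) ^ b :=
        mul_le_mul_of_nonneg_right (hscale.trans hM') (by positivity)
    _ = (2 * A ^ (k + 1)) ^ (b + 1) * τ := by ring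
    _ ≤ (2 * A ^ (k + 1)) ^ (k + 1) * τ :=
        mul_le_mul_of_nonneg_right (pow_le_pow_right₀ (by linarith) (by omega)) hτ0
    _ = recoveryConst (Fintype.card σ) k * τ := by rw [hC]

theorem coeffNormSq_sum_X_mul_le {k : ℕ} (hS : S.totalDegree ≤ k) (hB : 3 * k + 1 ≤ B.card)
    (hτ : ∀ m, (∃ j ∈ B, m j = 1) → |((∑ j, X j) * S).coeff m| ≤ τ) :
    coeffNormSq ((∑ j, X j) * S)
      ≤ ((k + 2) ^ Fintype.card σ * ((k + 1) * recoveryConst (Fintype.card σ) k) ^ 2 : ℕ)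
        * τ ^ 2 := by
  set C := recoveryConst (Fintype.card σ) k
  have hdeg : ((∑ j, X j) * S).totalDegree ≤ k + 1 := by
    refine (totalDegree_mul _ _).trans ?_
    have : (∑ j, X j : MvPolynomial σ ℝ).totalDegree ≤ 1 :=
      (totalDegree_finsetSum _ _).trans (Finset.sup_le fun j _ => (totalDegree_X j).le)
    omega
  have hS' := abs_coeff_le_of_abs_coeff_sum_X_mul_le hS hB hτ
  have hcoeff : ∀ m ∈ ((∑ j, X j) * S).support,
      |((∑ j, X j) * S).coeff m| ≤ (k + 1) * C * τ := by
    intro m hm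
    rw [coeff_sum_X_mul, mul_assoc]
    calc |∑ l ∈ m.support, S.coeff (m - Finsupp.single l 1)|
        ≤ ∑ l ∈ m.support, |S.coeff (m - Finsupp.single l 1)| := abs_sum_le_sum_abs _ _
      _ ≤ m.support.card * (C * τ) := by
          rw [← nsmul_eq_mul]
          exact sum_le_card_nsmul _ _ _ fun l _ => hS' _
      _ ≤ (k + 1) * (C * τ) := by
          refine mul_le_mul_of_nonneg_right ?_ ((abs_nonneg _).trans (hS' 0))
          exact_mod_cast (m.card_support_le_degree.trans (le_totalDegree hm)).trans hdeg
  calc coeffNormSq ((∑ j, X j) * S)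
      ≤ ((∑ j, X j) * S).support.card * ((k + 1) * C * τ) ^ 2 :=
        coeffNormSq_le_card_support_mul _ hcoeff
    _ ≤ (k + 2) ^ Fintype.card σ * ((k + 1) * C * τ) ^ 2 := by
        gcongr
        exact_mod_cast card_support_le_of_totalDegree_le _ hdeg
    _ = _ := by push_cast; ring

end Recovery

theorem coeffNormSq_le_of_coeffNormSq_linearPart_le {T k : ℕ} {S : MvPolynomial (Fin T) ℝ}
    (hS : S.totalDegree ≤ k) {B : Finset (Fin T)} (hB : 3 * k + 1 ≤ B.card) {θ : ℝ}
    (hθ : ∀ j ∈ B, coeffNormSq (linearPart ((∑ j, X j) * S) j) ≤ θ) :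
    coeffNormSq ((∑ j, X j) * S)
      ≤ ((k + 2) ^ T * ((k + 1) * recoveryConst T k) ^ 2 : ℕ) * θ := by
  obtain ⟨j, hj⟩ := card_pos.1 (show 0 < B.card by omega)
  have hθ0 : 0 ≤ θ := (coeffNormSq_nonneg _).trans (hθ j hj)
  have := coeffNormSq_sum_X_mul_le hS hB (τ := √θ) fun m ⟨j, hj, hmj⟩ =>
    Real.abs_le_sqrt <| by
      rw [← coeff_linearPart _ hmj]
      exact (sq_coeff_le_coeffNormSq _ _).trans (hθ j hj)
  rwa [Real.sq_sqrt hθ0, Fintype.card_fin] at this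

theorem cubic_lt_four_pow {d : ℕ} (hd : 4 ≤ d) :
    2 * d ^ 3 + 2 * d ^ 2 + 12 * d + 2 < 4 ^ d := by
  induction d, hd using Nat.le_induction with
  | base => norm_num
  | succ n hn ih =>
    have : 2 * (n + 1) ^ 3 + 2 * (n + 1) ^ 2 + 12 * (n + 1) + 2
        ≤ 4 * (2 * n ^ 3 + 2 * n ^ 2 + 12 * n + 2) := by
      nlinarith
    have := pow_succ 4 n
    omega

theorem recoveryConst_sq_mul_lt (k : ℕ) :
    (k + 2) ^ (10 * (k + 1)) * ((k + 1) * recoveryConst (10 * (k + 1)) k) ^ 2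
      < (20 * (k + 1) * (10 * (k + 1))) ^ 4 ^ (k + 1) := by
  unfold recoveryConst
  rcases Nat.lt_or_ge k 3 with hk | hk
  · interval_cases k <;> norm_num
  generalize hK : 20 * (k + 1) * (10 * (k + 1)) = K
  have h2 : 2 ≤ K := by nlinarith
  calc _ ≤ K ^ (10 * (k + 1)) * (K * (K * (K * K ^ (k + 1)) ^ (k + 1)) ^ (k + 1)) ^ 2 := by
        gcongr <;> nlinarith
    _ = K ^ (2 * (k + 1) ^ 3 + 2 * (k + 1) ^ 2 + 12 * (k + 1) + 2) := by
        simp only [← pow_succ', ← pow_mul, ← pow_add]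
        ring_nf
    _ < K ^ 4 ^ (k + 1) := Nat.pow_lt_pow_right h2 (cubic_lt_four_pow (by omega))

theorem stmt14 (d : ℕ) (hd : 1 ≤ d) (T : ℕ) (hT : T = 10 * d)
    (S : MvPolynomial (Fin T) ℝ) (hS : S.totalDegree ≤ d - 1)
    (Q : MvPolynomial (Fin T) ℝ)
    (hQ : Q = C (1 / Real.sqrt T) * (∑ j : Fin T, X j) * S) :
    (T : ℝ) / 2 ≤
      ((Finset.univ.filter (fun j : Fin T =>
        (1 / (T : ℝ)) * ((20 * d * T : ℝ) ^ (4 ^ d))⁻¹ * coeffNormSq Q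
          ≤ coeffNormSq (linearPart Q j))).card : ℝ) := by
  obtain ⟨k, rfl⟩ : ∃ k, d = k + 1 := ⟨d - 1, by omega⟩
  set K : ℝ := (20 * ((k + 1 : ℕ) : ℝ) * T) ^ 4 ^ (k + 1)
  set thr : ℝ := 1 / (T : ℝ) * K⁻¹ * coeffNormSq Q
  set good := univ.filter fun j => thr ≤ coeffNormSq (linearPart Q j)
  set bad := univ.filter fun j => ¬ thr ≤ coeffNormSq (linearPart Q j)
  by_contra! hfew
  have hsplit : good.card + bad.card = T := by
    rw [card_filter_add_card_filter_not, card_univ, Fintype.card_fin]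
  have hgood : 2 * good.card < T := (Nat.cast_lt (α := ℝ)).1 (by push_cast; linarith)
  have hbad : 3 * k + 1 ≤ bad.card := by omega
  have hthr : 0 < thr := by
    obtain ⟨j, hj⟩ := card_pos.1 (show 0 < bad.card by omega)
    exact (coeffNormSq_nonneg _).trans_lt (not_le.1 (mem_filter.1 hj).2)
  have hQ' : Q = (∑ j, X j) * (C (1 / Real.sqrt T) * S) := by rw [hQ]; ring
  have hnorm := coeffNormSq_le_of_coeffNormSq_linearPart_le (S := C (1 / Real.sqrt T) * S)
    ((totalDegree_mul _ _).trans (by rw [totalDegree_C]; omega)) hbad (θ := thr)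
    fun j hj => by rw [← hQ']; exact (not_le.1 (mem_filter.1 hj).2).le
  rw [← hQ'] at hnorm
  have hL : (((k + 2) ^ T * ((k + 1) * recoveryConst T k) ^ 2 : ℕ) : ℝ) < K := by
    simp only [K]
    subst hT
    exact_mod_cast recoveryConst_sq_mul_lt k
  have hT1 : (1 : ℝ) ≤ T := by exact_mod_cast (show 1 ≤ T by omega)
  have hK : 0 < K := by positivity
  have hq : coeffNormSq Q = T * (K * thr) := by simp only [thr]; field_simp
  nlinarith [mul_lt_mul_of_pos_right hL hthr,
    mul_le_mul_of_nonneg_right hT1 (mul_pos hK hthr).le]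
end
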